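/- Let p = 2, α > 0, β > 0. For every γ > 0, one has I(γ, γ, γ) = 3·J₂(γ), where J₂(γ) := inf{ (1/2)‖∂ₓu‖²_{L²} − ((α+β)/3)‖u‖³_{L³} : u ∈ H¹(ℝ,ℂ), ‖u‖²_{L²} = γ }. -/

import Mathlib

open MeasureTheory Filter Complex

noncomputable section

/-- Membership in `H¹(ℝ, ℂ)` (modeled via the classical derivative). -/
def InH1 (f : ℝ → ℂ) : Prop :=
  MemLp f 2 (volume : Measure ℝ) ∧ Differentiable ℝ f ∧
    MemLp (deriv f) 2 (volume : Measure ℝ)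

/-- `‖f‖_{L²}²`. -/
def massSq (f : ℝ → ℂ) : ℝ := ∫ x : ℝ, ‖f x‖ ^ 2

/-- `‖∂ₓ f‖_{L²}²`. -/
def kinetic (f : ℝ → ℂ) : ℝ := ∫ x : ℝ, ‖deriv f x‖ ^ 2

/-- `∫ |f|^{p+1}`. -/
def potential (p : ℝ) (f : ℝ → ℂ) : ℝ := ∫ x : ℝ, ‖f x‖ ^ (p + 1)

/-- `Re ∫ u₁ u₂ (conj u₃)`. -/
def interaction (u1 u2 u3 : ℝ → ℂ) : ℝ :=
  ∫ x : ℝ, (u1 x * u2 x * (starRingEnd ℂ) (u3 x)).re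

/-- The energy functional `E`. -/
def energy (p α β : ℝ) (u1 u2 u3 : ℝ → ℂ) : ℝ :=
  ((1 / 2) * kinetic u1 - β / (p + 1) * potential p u1)
    + ((1 / 2) * kinetic u2 - β / (p + 1) * potential p u2)
    + ((1 / 2) * kinetic u3 - β / (p + 1) * potential p u3)
    - α * interaction u1 u2 u3

/-- The set of energies of admissible triples for `I(γ, μ, s)`. -/
def constraintSet (p α β γ μ s : ℝ) : Set ℝ :=
  { e | ∃ u1 u2 u3 : ℝ → ℂ, InH1 u1 ∧ InH1 u2 ∧ InH1 u3 ∧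
      massSq u1 = γ ∧ massSq u2 = μ ∧ massSq u3 = s ∧ e = energy p α β u1 u2 u3 }

/-- `I(γ, μ, s)`. -/
def Iinf (p α β γ μ s : ℝ) : ℝ := sInf (constraintSet p α β γ μ s)

/-- A minimizing sequence for `I(γ, μ, s)`. -/
def MinimizingSeq (p α β γ μ s : ℝ) (u1 u2 u3 : ℕ → ℝ → ℂ) : Prop :=
  (∀ n, InH1 (u1 n) ∧ InH1 (u2 n) ∧ InH1 (u3 n)) ∧
  Tendsto (fun n => massSq (u1 n)) atTop (nhds γ) ∧
  Tendsto (fun n => massSq (u2 n)) atTop (nhds μ) ∧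
  Tendsto (fun n => massSq (u3 n)) atTop (nhds s) ∧
  Tendsto (fun n => energy p α β (u1 n) (u2 n) (u3 n)) atTop
    (nhds (Iinf p α β γ μ s))

/-- `∫_{y-r}^{y+r} (|u₁|² + |u₂|² + |u₃|²)`. -/
def localMass (u1 u2 u3 : ℝ → ℂ) (y r : ℝ) : ℝ :=
  ∫ x in Set.Icc (y - r) (y + r), (‖u1 x‖ ^ 2 + ‖u2 x‖ ^ 2 + ‖u3 x‖ ^ 2)

/-- `λ` is the concentration parameter of the sequence. -/
def IsConcentration (u1 u2 u3 : ℕ → ℝ → ℂ) (lam : ℝ) : Prop :=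
  Tendsto (fun r : ℝ =>
      limsup (fun n => ⨆ y : ℝ, localMass (u1 n) (u2 n) (u3 n) y r) atTop)
    atTop (nhds lam)

/-- The squared `H¹` norm. -/
def H1normSq (f : ℝ → ℂ) : ℝ := massSq f + kinetic f

/-- The `H¹(ℝ; ℂ³)` distance between two triples. -/
def H1dist3 (u v : (ℝ → ℂ) × (ℝ → ℂ) × (ℝ → ℂ)) : ℝ :=
  Real.sqrt (H1normSq (u.1 - v.1) + H1normSq (u.2.1 - v.2.1)
    + H1normSq (u.2.2 - v.2.2))

/-- The set `𝒢_{γ,μ,s}` of minimizers of `I(γ, μ, s)`. -/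
def GSet (p α β γ μ s : ℝ) : Set ((ℝ → ℂ) × (ℝ → ℂ) × (ℝ → ℂ)) :=
  { u | InH1 u.1 ∧ InH1 u.2.1 ∧ InH1 u.2.2 ∧
      massSq u.1 = γ ∧ massSq u.2.1 = μ ∧ massSq u.2.2 = s ∧
      energy p α β u.1 u.2.1 u.2.2 = Iinf p α β γ μ s }

/-- Symmetric decreasing rearrangement of a real function:
`f*(x) = |{t > 0 : x ∈ I_t}|` where `I_t` is the open interval centered at `0`
of length `|{ z : |f z| > t }|`. -/
def symmRearr (f : ℝ → ℝ) (x : ℝ) : ℝ :=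
  (volume { t : ℝ | 0 < t ∧
      ENNReal.ofReal (2 * |x|) < volume { z : ℝ | t < |f z| } }).toReal

/-- The constraint set for `J(γ, μ)` (with `Q₁(u) = γ`, `Q₂(u) = μ`). -/
def JconstraintSet (p α β γ μ : ℝ) : Set ℝ :=
  { e | ∃ u1 u2 u3 : ℝ → ℂ, InH1 u1 ∧ InH1 u2 ∧ InH1 u3 ∧
      massSq u1 + massSq u3 = γ ∧ massSq u2 + massSq u3 = μ ∧
      e = energy p α β u1 u2 u3 }

/-- `J(γ, μ)`. -/
def Jinf (p α β γ μ : ℝ) : ℝ := sInf (JconstraintSet p α β γ μ)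

/-- A minimizing sequence for `J(γ, μ)`. -/
def JMinimizingSeq (p α β γ μ : ℝ) (u1 u2 u3 : ℕ → ℝ → ℂ) : Prop :=
  (∀ n, InH1 (u1 n) ∧ InH1 (u2 n) ∧ InH1 (u3 n)) ∧
  Tendsto (fun n => massSq (u1 n) + massSq (u3 n)) atTop (nhds γ) ∧
  Tendsto (fun n => massSq (u2 n) + massSq (u3 n)) atTop (nhds μ) ∧
  Tendsto (fun n => energy p α β (u1 n) (u2 n) (u3 n)) atTop
    (nhds (Jinf p α β γ μ))

/-- The set `ℳ_{γ,μ}` of minimizers of `J(γ, μ)`. -/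
def MSet (p α β γ μ : ℝ) : Set ((ℝ → ℂ) × (ℝ → ℂ) × (ℝ → ℂ)) :=
  { u | InH1 u.1 ∧ InH1 u.2.1 ∧ InH1 u.2.2 ∧
      massSq u.1 + massSq u.2.2 = γ ∧ massSq u.2.1 + massSq u.2.2 = μ ∧
      energy p α β u.1 u.2.1 u.2.2 = Jinf p α β γ μ }

end

/-!
Pointwise, `|Re (u₁ u₂ ū₃)| ≤ |u₁| |u₂| |u₃| ≤ (|u₁|³ + |u₂|³ + |u₃|³) / 3`, so for `α ≥ 0` the
energy of a triple dominates the sum of the scalar energies `½‖u'‖² - (α + β)/3 ‖u‖³_{L³}` of its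
components; this gives `I(γ, γ, γ) ≥ 3 J₂(γ)`. Conversely, for a nonnegative real `w` the triple
`(w, w, w)` has energy exactly `3 (½‖w'‖² - (α + β)/3 ‖w‖³_{L³})`, and every `u` can be replaced by
a nonnegative function of the same mass and almost no larger scalar energy: a rescaling of
`√(|u|² + ε²) - ε`. The scalar infimum is finite by the Sobolev bound `‖u‖²_∞ ≤ ‖u‖²_{H¹}`.
-/

open Set
open scoped ComplexOrder InnerProductSpace Topology

lemma le_integral_abs_of_hasDerivAt {g g' : ℝ → ℝ} (hd : ∀ x, HasDerivAt g (g' x) x)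
    (hg : Integrable g) (hg' : Integrable g') (x : ℝ) : g x ≤ ∫ t, |g' t| := by
  have hlim : Tendsto g atBot (𝓝 0) :=
    tendsto_zero_of_hasDerivAt_of_integrableOn_Iic (a := x) (fun y _ => hd y)
      hg'.integrableOn hg.integrableOn
  calc g x = ∫ t in Iic x, g' t := by
        rw [integral_Iic_of_hasDerivAt_of_tendsto' (fun y _ => hd y) hg'.integrableOn hlim,
          sub_zero]
    _ ≤ ∫ t in Iic x, |g' t| :=
        setIntegral_mono hg'.integrableOn hg'.abs.integrableOn fun t => le_abs_self _
    _ ≤ ∫ t, |g' t| :=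
        setIntegral_le_integral hg'.abs (Eventually.of_forall fun t => abs_nonneg _)

lemma abs_two_mul_inner_le {F : Type*} [NormedAddCommGroup F] [InnerProductSpace ℝ F]
    (a b : F) : |2 * ⟪a, b⟫_ℝ| ≤ ‖a‖ ^ 2 + ‖b‖ ^ 2 := by
  rw [abs_mul, abs_two]
  calc 2 * |⟪a, b⟫_ℝ| ≤ 2 * (‖a‖ * ‖b‖) := by gcongr; exact abs_real_inner_le_norm a b
    _ ≤ ‖a‖ ^ 2 + ‖b‖ ^ 2 := by rw [← mul_assoc]; exact two_mul_le_add_sq _ _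

lemma massSq_nonneg (f : ℝ → ℂ) : 0 ≤ massSq f :=
  integral_nonneg fun _ => by positivity

lemma kinetic_nonneg (f : ℝ → ℂ) : 0 ≤ kinetic f :=
  integral_nonneg fun _ => by positivity

namespace InH1

variable {f : ℝ → ℂ}

lemma integrable_norm_sq (hf : InH1 f) : Integrable (fun x => ‖f x‖ ^ 2) :=
  hf.1.norm.integrable_sq

lemma integrable_norm_deriv_sq (hf : InH1 f) : Integrable (fun x => ‖deriv f x‖ ^ 2) :=
  hf.2.2.norm.integrable_sq

lemma norm_sq_le (hf : InH1 f) (x : ℝ) : ‖f x‖ ^ 2 ≤ massSq f + kinetic f := by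
  have hd : ∀ t, HasDerivAt (fun t => ‖f t‖ ^ 2) (2 * ⟪f t, deriv f t⟫_ℝ) t :=
    fun t => (hf.2.1 t).hasDerivAt.norm_sq
  have hsum := hf.integrable_norm_sq.add hf.integrable_norm_deriv_sq
  have hd' : Integrable fun t => 2 * ⟪f t, deriv f t⟫_ℝ :=
    hsum.mono'
      ((hf.2.1.continuous.measurable.inner (measurable_deriv f)).const_mul 2).aestronglyMeasurable
      (Eventually.of_forall fun t => abs_two_mul_inner_le _ _)
  calc ‖f x‖ ^ 2 ≤ ∫ t, |2 * ⟪f t, deriv f t⟫_ℝ| :=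
        le_integral_abs_of_hasDerivAt hd hf.integrable_norm_sq hd' x
    _ ≤ ∫ t, (‖f t‖ ^ 2 + ‖deriv f t‖ ^ 2) :=
        integral_mono hd'.abs hsum fun t => abs_two_mul_inner_le _ _
    _ = massSq f + kinetic f := integral_add hf.integrable_norm_sq hf.integrable_norm_deriv_sq

lemma norm_cube_le (hf : InH1 f) (x : ℝ) :
    ‖f x‖ ^ 3 ≤ √(massSq f + kinetic f) * ‖f x‖ ^ 2 := by
  rw [pow_succ']
  exact mul_le_mul_of_nonneg_right (Real.le_sqrt_of_sq_le (hf.norm_sq_le x)) (by positivity)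

lemma integrable_norm_cube (hf : InH1 f) : Integrable (fun x => ‖f x‖ ^ 3) :=
  (hf.integrable_norm_sq.const_mul _).mono' (hf.2.1.continuous.norm.pow 3).aestronglyMeasurable
    (Eventually.of_forall fun x => by
      rw [Real.norm_of_nonneg (by positivity)]; exact hf.norm_cube_le x)

lemma integral_norm_cube_le (hf : InH1 f) :
    ∫ x, ‖f x‖ ^ 3 ≤ √(massSq f + kinetic f) * massSq f := by
  rw [massSq, ← integral_const_mul]
  exact integral_mono hf.integrable_norm_cube (hf.integrable_norm_sq.const_mul _) hf.norm_cube_le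

end InH1

noncomputable def scalarEnergy (C : ℝ) (u : ℝ → ℂ) : ℝ :=
  1 / 2 * kinetic u - C * ∫ x : ℝ, ‖u x‖ ^ (3 : ℕ)

noncomputable def scalarEnergyLevelSet (C γ : ℝ) : Set ℝ :=
  { e | ∃ u : ℝ → ℂ, InH1 u ∧ massSq u = γ ∧ e = scalarEnergy C u }

lemma InH1.neg_le_scalarEnergy {u : ℝ → ℂ} (hu : InH1 u) (C : ℝ) :
    -(massSq u / 2 + (C * massSq u) ^ 2 / 2) ≤ scalarEnergy C u := by
  set M := √(massSq u + kinetic u)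
  have hM : M ^ 2 = massSq u + kinetic u :=
    Real.sq_sqrt (add_nonneg (massSq_nonneg u) (kinetic_nonneg u))
  have hP : C * ∫ x, ‖u x‖ ^ 3 ≤ |C| * (M * massSq u) :=
    (le_abs_self _).trans <| by
      rw [abs_mul, abs_of_nonneg (integral_nonneg fun _ => by positivity)]
      exact mul_le_mul_of_nonneg_left hu.integral_norm_cube_le (abs_nonneg C)
  have hAM : |C| * (M * massSq u) ≤ (M ^ 2 + (C * massSq u) ^ 2) / 2 := by
    have h : (M ^ 2 + (C * massSq u) ^ 2) / 2 - |C| * (M * massSq u)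
        = (M - |C| * massSq u) ^ 2 / 2 := by
      rw [mul_pow, ← sq_abs C]; ring
    nlinarith [sq_nonneg (M - |C| * massSq u)]
  unfold scalarEnergy
  linarith

lemma bddBelow_scalarEnergyLevelSet (C γ : ℝ) : BddBelow (scalarEnergyLevelSet C γ) :=
  ⟨-(γ / 2 + (C * γ) ^ 2 / 2), by
    rintro _ ⟨u, hu, rfl, rfl⟩
    exact hu.neg_le_scalarEnergy C⟩

lemma InH1.const_mul {f : ℝ → ℂ} (hf : InH1 f) (c : ℂ) : InH1 (fun x => c * f x) :=
  ⟨hf.1.const_mul c, hf.2.1.const_mul c, by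
    rw [deriv_const_mul_field']; exact hf.2.2.const_mul c⟩

lemma massSq_const_mul (c : ℂ) (f : ℝ → ℂ) :
    massSq (fun x => c * f x) = ‖c‖ ^ 2 * massSq f := by
  simp only [massSq, norm_mul, mul_pow, integral_const_mul]

lemma kinetic_const_mul (c : ℂ) (f : ℝ → ℂ) :
    kinetic (fun x => c * f x) = ‖c‖ ^ 2 * kinetic f := by
  simp only [kinetic, deriv_const_mul_field', norm_mul, mul_pow, integral_const_mul]

lemma scalarEnergy_const_mul (C : ℝ) (c : ℂ) (f : ℝ → ℂ) :
    scalarEnergy C (fun x => c * f x)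
      = ‖c‖ ^ 2 * (1 / 2 * kinetic f) - ‖c‖ ^ 3 * (C * ∫ x, ‖f x‖ ^ 3) := by
  simp only [scalarEnergy, kinetic_const_mul, norm_mul, mul_pow, integral_const_mul]
  ring

lemma InH1.ofReal {h h' : ℝ → ℝ} (hd : ∀ x, HasDerivAt h (h' x) x) (h2 : MemLp h 2)
    (h2' : MemLp h' 2) : InH1 (fun x => (h x : ℂ)) :=
  ⟨h2.ofReal, fun x => (hd x).ofReal_comp.differentiableAt, by
    rw [show deriv (fun x => (h x : ℂ)) = fun x => (h' x : ℂ) from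
      funext fun x => (hd x).ofReal_comp.deriv]
    exact h2'.ofReal⟩

lemma massSq_ofReal (h : ℝ → ℝ) : massSq (fun x => (h x : ℂ)) = ∫ x, h x ^ 2 := by
  simp only [massSq, Complex.norm_real, Real.norm_eq_abs, sq_abs]

lemma exists_inH1_massSq_eq {γ : ℝ} (hγ : 0 ≤ γ) : ∃ u : ℝ → ℂ, InH1 u ∧ massSq u = γ := by
  have hd : ∀ x : ℝ, HasDerivAt (fun x => Real.exp (-x ^ 2)) (Real.exp (-x ^ 2) * (-(2 * x))) x :=
    fun x => by simpa using ((hasDerivAt_pow 2 x).neg).exp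
  have hsq : ∀ x : ℝ, Real.exp (-x ^ 2) ^ 2 = Real.exp (-2 * x ^ 2) := fun x => by
    rw [← Real.exp_nat_mul]; ring_nf
  have h2 : MemLp (fun x : ℝ => Real.exp (-x ^ 2)) 2 := by
    rw [memLp_two_iff_integrable_sq (by fun_prop)]
    simpa only [hsq] using integrable_exp_neg_mul_sq two_pos
  have h2' : MemLp (fun x : ℝ => Real.exp (-x ^ 2) * (-(2 * x))) 2 := by
    rw [memLp_two_iff_integrable_sq (by fun_prop)]
    refine ((integrable_rpow_mul_exp_neg_mul_sq two_pos (s := 2) (by norm_num)).const_mul 4).congr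
      (Eventually.of_forall fun x => ?_)
    simp only [Real.rpow_two, mul_pow, hsq]
    ring
  have hm : massSq (fun x => (Real.exp (-x ^ 2) : ℂ)) = √(Real.pi / 2) := by
    simp only [massSq_ofReal, hsq, integral_gaussian]
  have hm0 : 0 < √(Real.pi / 2) := Real.sqrt_pos.2 (by positivity)
  refine ⟨fun x => (√(γ / √(Real.pi / 2)) : ℂ) * (Real.exp (-x ^ 2) : ℂ),
    (InH1.ofReal hd h2 h2').const_mul _, ?_⟩
  rw [massSq_const_mul, hm, Complex.norm_real, Real.norm_eq_abs, sq_abs,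
    Real.sq_sqrt (by positivity), div_mul_cancel₀ _ hm0.ne']

/-- A differentiable substitute for `‖u‖`, which need not be differentiable where `u` vanishes. -/
noncomputable def regNorm (ε : ℝ) (u : ℝ → ℂ) (x : ℝ) : ℝ := √(‖u x‖ ^ 2 + ε ^ 2) - ε

section regNorm

variable {ε : ℝ} {u : ℝ → ℂ}

lemma regNorm_zero (u : ℝ → ℂ) (x : ℝ) : regNorm 0 u x = ‖u x‖ := by
  simp [regNorm]

lemma regNorm_nonneg (ε : ℝ) (u : ℝ → ℂ) (x : ℝ) : 0 ≤ regNorm ε u x :=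
  sub_nonneg.2 (Real.le_sqrt_of_sq_le (le_add_of_nonneg_left (sq_nonneg _)))

lemma regNorm_le (hε : 0 ≤ ε) (u : ℝ → ℂ) (x : ℝ) : regNorm ε u x ≤ ‖u x‖ := by
  rw [regNorm, sub_le_iff_le_add, Real.sqrt_le_left (by positivity)]
  nlinarith [norm_nonneg (u x)]

lemma continuous_regNorm (hu : Continuous u) : Continuous (regNorm ε u) := by
  unfold regNorm; fun_prop

lemma hasDerivAt_regNorm (hu : Differentiable ℝ u) (hε : ε ≠ 0) (x : ℝ) :
    HasDerivAt (regNorm ε u) (⟪u x, deriv u x⟫_ℝ / √(‖u x‖ ^ 2 + ε ^ 2)) x := by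
  have hpos : 0 < ‖u x‖ ^ 2 + ε ^ 2 := by positivity
  exact (((((hu x).hasDerivAt.norm_sq).add_const (ε ^ 2)).sqrt hpos.ne').sub_const ε).congr_deriv
    (mul_div_mul_left _ _ two_ne_zero)

lemma abs_inner_div_sqrt_le (hε : ε ≠ 0) (a b : ℂ) :
    |⟪a, b⟫_ℝ / √(‖a‖ ^ 2 + ε ^ 2)| ≤ ‖b‖ := by
  have hpos : 0 < √(‖a‖ ^ 2 + ε ^ 2) := Real.sqrt_pos.2 (by positivity)
  rw [abs_div, abs_of_pos hpos, div_le_iff₀ hpos, mul_comm]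
  calc |⟪a, b⟫_ℝ| ≤ ‖a‖ * ‖b‖ := abs_real_inner_le_norm a b
    _ ≤ √(‖a‖ ^ 2 + ε ^ 2) * ‖b‖ := by
        gcongr; exact Real.le_sqrt_of_sq_le (le_add_of_nonneg_right (sq_nonneg _))

lemma InH1.memLp_deriv_regNorm (hu : InH1 u) (hε : 0 < ε) :
    MemLp (fun x => ⟪u x, deriv u x⟫_ℝ / √(‖u x‖ ^ 2 + ε ^ 2)) 2 :=
  have hc := hu.2.1.continuous
  hu.2.2.of_le
    ((hc.measurable.inner (measurable_deriv u)).div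
      (by fun_prop : Continuous fun x => √(‖u x‖ ^ 2 + ε ^ 2)).measurable).aestronglyMeasurable
    (Eventually.of_forall fun x => abs_inner_div_sqrt_le hε.ne' _ _)

lemma InH1.ofReal_regNorm (hu : InH1 u) (hε : 0 < ε) : InH1 (fun x => (regNorm ε u x : ℂ)) :=
  InH1.ofReal (hasDerivAt_regNorm hu.2.1 hε.ne')
    (hu.1.of_le (continuous_regNorm hu.2.1.continuous).aestronglyMeasurable
      (Eventually.of_forall fun x => by
        rw [Real.norm_of_nonneg (regNorm_nonneg ε u x)]
        exact regNorm_le hε.le u x))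
    (hu.memLp_deriv_regNorm hε)

lemma InH1.kinetic_regNorm_le (hu : InH1 u) (hε : 0 < ε) :
    kinetic (fun x => (regNorm ε u x : ℂ)) ≤ kinetic u := by
  have hderiv : deriv (fun x => (regNorm ε u x : ℂ))
      = fun x => ((⟪u x, deriv u x⟫_ℝ / √(‖u x‖ ^ 2 + ε ^ 2) : ℝ) : ℂ) :=
    funext fun x => (hasDerivAt_regNorm hu.2.1 hε.ne' x).ofReal_comp.deriv
  rw [kinetic, kinetic, hderiv]
  refine integral_mono (hu.memLp_deriv_regNorm hε).ofReal.norm.integrable_sq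
    hu.integrable_norm_deriv_sq fun x => ?_
  rw [Complex.norm_real, Real.norm_eq_abs]
  exact pow_le_pow_left₀ (abs_nonneg _) (abs_inner_div_sqrt_le hε.ne' _ _) 2

lemma tendsto_integral_norm_regNorm_pow (hu : Continuous u) {k : ℕ}
    (hk : Integrable fun x => ‖u x‖ ^ k) :
    Tendsto (fun ε => ∫ x, ‖(regNorm ε u x : ℂ)‖ ^ k) (𝓝[>] 0) (𝓝 (∫ x, ‖u x‖ ^ k)) := by
  have hnorm : ∀ ε x, ‖(regNorm ε u x : ℂ)‖ = regNorm ε u x := fun ε x => by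
    rw [Complex.norm_real, Real.norm_of_nonneg (regNorm_nonneg ε u x)]
  simp only [hnorm]
  refine tendsto_integral_filter_of_dominated_convergence _
    (Eventually.of_forall fun ε => ((continuous_regNorm hu).pow k).aestronglyMeasurable)
    (eventually_mem_nhdsWithin.mono fun ε (hε : 0 < ε) => Eventually.of_forall fun x => ?_) hk
    (Eventually.of_forall fun x => ?_)
  · rw [Real.norm_of_nonneg (pow_nonneg (regNorm_nonneg ε u x) k)]
    exact pow_le_pow_left₀ (regNorm_nonneg ε u x) (regNorm_le hε.le u x) k
  · rw [← regNorm_zero u x]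
    have hcont : Continuous fun ε => regNorm ε u x ^ k := by unfold regNorm; fun_prop
    exact (hcont.tendsto 0).mono_left nhdsWithin_le_nhds

end regNorm

/-- Take `w = c * regNorm ε u` with `c` restoring the mass and `ε` small: the kinetic term does
not increase, while the mass and the `L³` norm converge as `ε → 0`. -/
lemma InH1.exists_nonneg_scalarEnergy_lt {u : ℝ → ℂ} (hu : InH1 u) (hm : 0 < massSq u)
    (C : ℝ) {δ : ℝ} (hδ : 0 < δ) :
    ∃ w : ℝ → ℂ, InH1 w ∧ (∀ x, 0 ≤ w x) ∧ massSq w = massSq u ∧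
      scalarEnergy C w < scalarEnergy C u + δ := by
  set v : ℝ → ℝ → ℂ := fun ε x => (regNorm ε u x : ℂ)
  set c : ℝ → ℝ := fun ε => √(massSq u / massSq (v ε))
  have hmass : Tendsto (fun ε => massSq (v ε)) (𝓝[>] 0) (𝓝 (massSq u)) :=
    tendsto_integral_norm_regNorm_pow hu.2.1.continuous hu.integrable_norm_sq
  have hcube : Tendsto (fun ε => ∫ x, ‖v ε x‖ ^ 3) (𝓝[>] 0) (𝓝 (∫ x, ‖u x‖ ^ 3)) :=
    tendsto_integral_norm_regNorm_pow hu.2.1.continuous hu.integrable_norm_cube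
  have hc : Tendsto c (𝓝[>] 0) (𝓝 1) := by
    have h := (Real.continuous_sqrt.tendsto _).comp
      ((tendsto_const_nhds (x := massSq u)).div hmass hm.ne')
    rwa [div_self hm.ne', Real.sqrt_one] at h
  have hbound : Tendsto (fun ε => c ε ^ 2 * (1 / 2 * kinetic u) - c ε ^ 3 * (C * ∫ x, ‖v ε x‖ ^ 3))
      (𝓝[>] 0) (𝓝 (scalarEnergy C u)) := by
    have h := ((hc.pow 2).mul_const (1 / 2 * kinetic u)).sub ((hc.pow 3).mul (hcube.const_mul C))
    rwa [one_pow, one_pow, one_mul, one_mul] at h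
  obtain ⟨ε, hε, hmε, hlt⟩ := (eventually_mem_nhdsWithin.and ((hmass.eventually
    (eventually_gt_nhds hm)).and (hbound.eventually
      (eventually_lt_nhds (lt_add_of_pos_right _ hδ))))).exists
  have hnorm : ‖(c ε : ℂ)‖ = c ε := by
    rw [Complex.norm_real, Real.norm_of_nonneg (Real.sqrt_nonneg _)]
  refine ⟨fun x => (c ε : ℂ) * v ε x, (hu.ofReal_regNorm hε).const_mul _,
    fun x => mul_nonneg (Complex.zero_le_real.2 (Real.sqrt_nonneg _))
      (Complex.zero_le_real.2 (regNorm_nonneg ε u x)), ?_, ?_⟩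
  · rw [massSq_const_mul, hnorm, Real.sq_sqrt (div_pos hm hmε).le, div_mul_cancel₀ _ hmε.ne']
  · rw [scalarEnergy_const_mul, hnorm]
    refine lt_of_le_of_lt ?_ hlt
    gcongr
    exact hu.kinetic_regNorm_le hε

lemma mul_mul_le_add_add_pow_three_div_three {a b c : ℝ} (ha : 0 ≤ a) (hb : 0 ≤ b)
    (hc : 0 ≤ c) : a * b * c ≤ (a ^ 3 + b ^ 3 + c ^ 3) / 3 := by
  nlinarith [mul_nonneg (add_nonneg (add_nonneg ha hb) hc) (sq_nonneg (a - b)),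
    mul_nonneg (add_nonneg (add_nonneg ha hb) hc) (sq_nonneg (b - c)),
    mul_nonneg (add_nonneg (add_nonneg ha hb) hc) (sq_nonneg (a - c))]

lemma abs_re_mul_mul_conj_le (a b c : ℂ) :
    |(a * b * (starRingEnd ℂ) c).re| ≤ (‖a‖ ^ 3 + ‖b‖ ^ 3 + ‖c‖ ^ 3) / 3 :=
  calc |(a * b * (starRingEnd ℂ) c).re| ≤ ‖a * b * (starRingEnd ℂ) c‖ :=
        Complex.abs_re_le_norm _
    _ = ‖a‖ * ‖b‖ * ‖c‖ := by rw [norm_mul, norm_mul, RCLike.norm_conj]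
    _ ≤ (‖a‖ ^ 3 + ‖b‖ ^ 3 + ‖c‖ ^ 3) / 3 :=
        mul_mul_le_add_add_pow_three_div_three (norm_nonneg _) (norm_nonneg _) (norm_nonneg _)

lemma interaction_le {u₁ u₂ u₃ : ℝ → ℂ} (h₁ : InH1 u₁) (h₂ : InH1 u₂) (h₃ : InH1 u₃) :
    interaction u₁ u₂ u₃
      ≤ ((∫ x, ‖u₁ x‖ ^ 3) + (∫ x, ‖u₂ x‖ ^ 3) + (∫ x, ‖u₃ x‖ ^ 3)) / 3 := by
  have hsum := (h₁.integrable_norm_cube.add h₂.integrable_norm_cube).add h₃.integrable_norm_cube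
  have hint : Integrable fun x => (u₁ x * u₂ x * (starRingEnd ℂ) (u₃ x)).re :=
    (hsum.div_const 3).mono'
      (Complex.continuous_re.comp ((h₁.2.1.continuous.mul h₂.2.1.continuous).mul
        (Complex.continuous_conj.comp h₃.2.1.continuous))).aestronglyMeasurable
      (Eventually.of_forall fun x => abs_re_mul_mul_conj_le _ _ _)
  calc interaction u₁ u₂ u₃ ≤ ∫ x, (‖u₁ x‖ ^ 3 + ‖u₂ x‖ ^ 3 + ‖u₃ x‖ ^ 3) / 3 :=
        integral_mono hint (hsum.div_const 3)
          fun x => (le_abs_self _).trans (abs_re_mul_mul_conj_le _ _ _)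
    _ = _ := by
        rw [integral_div, integral_add _ h₃.integrable_norm_cube,
          integral_add h₁.integrable_norm_cube h₂.integrable_norm_cube]
        exact h₁.integrable_norm_cube.add h₂.integrable_norm_cube

lemma potential_two (f : ℝ → ℂ) : potential 2 f = ∫ x, ‖f x‖ ^ 3 := by
  simp only [potential, show (2 : ℝ) + 1 = (3 : ℕ) by norm_num, Real.rpow_natCast]

lemma energy_two (α β : ℝ) (u₁ u₂ u₃ : ℝ → ℂ) :
    energy 2 α β u₁ u₂ u₃
      = scalarEnergy (β / 3) u₁ + scalarEnergy (β / 3) u₂ + scalarEnergy (β / 3) u₃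
        - α * interaction u₁ u₂ u₃ := by
  simp only [energy, scalarEnergy, potential_two]
  norm_num

lemma sum_scalarEnergy_le_energy {α : ℝ} (hα : 0 ≤ α) (β : ℝ) {u₁ u₂ u₃ : ℝ → ℂ}
    (h₁ : InH1 u₁) (h₂ : InH1 u₂) (h₃ : InH1 u₃) :
    scalarEnergy ((α + β) / 3) u₁ + scalarEnergy ((α + β) / 3) u₂
        + scalarEnergy ((α + β) / 3) u₃ ≤ energy 2 α β u₁ u₂ u₃ := by
  rw [energy_two]
  have h := mul_le_mul_of_nonneg_left (interaction_le h₁ h₂ h₃) hα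
  simp only [scalarEnergy] at h ⊢
  linarith

lemma energy_two_diag_of_nonneg (α β : ℝ) {w : ℝ → ℂ} (hw : ∀ x, 0 ≤ w x) :
    energy 2 α β w w w = 3 * scalarEnergy ((α + β) / 3) w := by
  have hint : interaction w w w = ∫ x, ‖w x‖ ^ 3 := by
    refine integral_congr_ae (Eventually.of_forall fun x => ?_)
    change (w x * w x * (starRingEnd ℂ) (w x)).re = ‖w x‖ ^ 3
    rw [Complex.eq_coe_norm_of_nonneg (hw x), Complex.conj_ofReal]
    simp only [← Complex.ofReal_mul, Complex.ofReal_re, Complex.norm_real, Real.norm_eq_abs,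
      abs_norm]
    ring
  rw [energy_two, hint]
  simp only [scalarEnergy]
  ring

lemma three_mul_sInf_le_of_mem_constraintSet {α β γ e : ℝ} (hα : 0 ≤ α)
    (he : e ∈ constraintSet 2 α β γ γ γ) :
    3 * sInf (scalarEnergyLevelSet ((α + β) / 3) γ) ≤ e := by
  obtain ⟨u₁, u₂, u₃, h₁, h₂, h₃, hm₁, hm₂, hm₃, rfl⟩ := he
  have hle : ∀ {u}, InH1 u → massSq u = γ →
      sInf (scalarEnergyLevelSet ((α + β) / 3) γ) ≤ scalarEnergy ((α + β) / 3) u :=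
    fun hu hm => csInf_le (bddBelow_scalarEnergyLevelSet _ _) ⟨_, hu, hm, rfl⟩
  linarith [hle h₁ hm₁, hle h₂ hm₂, hle h₃ hm₃, sum_scalarEnergy_le_energy hα β h₁ h₂ h₃]

theorem symmetric_infimum_eq_three_times_scalar_general
    (α β γ : ℝ) (hα : 0 < α) (hγ : 0 < γ) :
    Iinf 2 α β γ γ γ
      = 3 * sInf { e : ℝ | ∃ u : ℝ → ℂ, InH1 u ∧ massSq u = γ ∧
          e = (1 / 2) * kinetic u - (α + β) / 3 * ∫ x : ℝ, ‖u x‖ ^ (3 : ℕ) } := by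
  change Iinf 2 α β γ γ γ = 3 * sInf (scalarEnergyLevelSet ((α + β) / 3) γ)
  obtain ⟨u₀, hu₀, hm₀⟩ := exists_inH1_massSq_eq hγ.le
  have hne : (scalarEnergyLevelSet ((α + β) / 3) γ).Nonempty := ⟨_, u₀, hu₀, hm₀, rfl⟩
  have hlower : ∀ e ∈ constraintSet 2 α β γ γ γ,
      3 * sInf (scalarEnergyLevelSet ((α + β) / 3) γ) ≤ e :=
    fun e he => three_mul_sInf_le_of_mem_constraintSet hα.le he
  refine le_antisymm (le_of_forall_pos_lt_add fun δ hδ => ?_)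
    (le_csInf ⟨_, u₀, u₀, u₀, hu₀, hu₀, hu₀, hm₀, hm₀, hm₀, rfl⟩ hlower)
  obtain ⟨_, ⟨u, hu, hm, rfl⟩, hlt⟩ := exists_lt_of_csInf_lt hne
    (lt_add_of_pos_right _ (by positivity : 0 < δ / 6))
  obtain ⟨w, hw, hw₀, hwm, hwE⟩ :=
    hu.exists_nonneg_scalarEnergy_lt (hm ▸ hγ) ((α + β) / 3) (by positivity : 0 < δ / 6)
  calc Iinf 2 α β γ γ γ ≤ energy 2 α β w w w :=
        csInf_le ⟨_, hlower⟩ ⟨w, w, w, hw, hw, hw, hwm.trans hm, hwm.trans hm, hwm.trans hm, rfl⟩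
    _ = 3 * scalarEnergy ((α + β) / 3) w := energy_two_diag_of_nonneg α β hw₀
    _ < 3 * sInf (scalarEnergyLevelSet ((α + β) / 3) γ) + δ := by linarith

theorem symmetric_infimum_eq_three_times_scalar
    (α β γ : ℝ) (hα : 0 < α) (hβ : 0 < β) (hγ : 0 < γ) :
    Iinf 2 α β γ γ γ
      = 3 * sInf { e : ℝ | ∃ u : ℝ → ℂ, InH1 u ∧ massSq u = γ ∧
          e = (1 / 2) * kinetic u - (α + β) / 3 * ∫ x : ℝ, ‖u x‖ ^ (3 : ℕ) } :=
  symmetric_infimum_eq_three_times_scalar_general α β γ hα hγ
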